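/- arXiv:2410.00781 — 2 statements merged into one kernel-verified Lean document; each statement's English description precedes it below -/
import Mathlib

section
/- The ensemble (multiple-try) generalization of Barker's rule satisfies detailed balance: from state x, draw M i.i.d. proposals y₁,…,y_M from q, set candidates z₀ = x, z₁ = y₁, …, z_M = y_M, and move to z_m with probability proportional to w(z_m) := π(z_m)/q(z_m). The resulting Markov chain on the state space is reversible with respect to π. -/
open MeasureTheory Real Set ProbabilityTheory
open scoped ENNReal

lemma ofReal_swap {a b S : ℝ} (ha : 0 ≤ a) (hb : 0 ≤ b) :
    ENNReal.ofReal a * ENNReal.ofReal (b / S) = ENNReal.ofReal b * ENNReal.ofReal (a / S) := by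
  rw [← ENNReal.ofReal_mul ha, ← ENNReal.ofReal_mul hb]
  congr 1; ring

lemma barker_swap_aux {M : ℕ} (ν : Measure ℝ) [IsFiniteMeasure ν]
    (w : ℝ → ℝ) (hwnn : ∀ x, 0 ≤ w x)
    (A B : Set ℝ) (i : Fin M) :
    ∫⁻ z : Fin (M+1) → ℝ, B.indicator (fun _ => (1:ℝ≥0∞)) (z 0) * ENNReal.ofReal (w (z 0)) *
      (ENNReal.ofReal (w (z i.succ) / ∑ j, w (z j)) * A.indicator (fun _ => (1:ℝ≥0∞)) (z i.succ))
      ∂(Measure.pi fun _ => ν)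
    = ∫⁻ z : Fin (M+1) → ℝ, A.indicator (fun _ => (1:ℝ≥0∞)) (z 0) * ENNReal.ofReal (w (z 0)) *
      (ENNReal.ofReal (w (z i.succ) / ∑ j, w (z j)) * B.indicator (fun _ => (1:ℝ≥0∞)) (z i.succ))
      ∂(Measure.pi fun _ => ν) := by
  set σ : Equiv.Perm (Fin (M+1)) := Equiv.swap 0 i.succ with hσ
  set T := MeasurableEquiv.piCongrLeft (fun _ : Fin (M+1) => ℝ) σ with hT
  have hMP : MeasurePreserving T (Measure.pi fun _ => ν) (Measure.pi fun _ => ν) :=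
    measurePreserving_piCongrLeft (fun _ => ν) σ
  rw [← hMP.lintegral_comp_emb T.measurableEmbedding]
  apply lintegral_congr
  intro z
  have happ : ∀ a : Fin (M+1), T z (σ a) = z a := fun a =>
    MeasurableEquiv.piCongrLeft_apply_apply (β := fun _ : Fin (M+1) => ℝ) σ z a
  have h0 : T z 0 = z i.succ := by
    have := happ i.succ
    rwa [show σ i.succ = 0 from Equiv.swap_apply_right _ _] at this
  have h1 : T z i.succ = z 0 := by
    have := happ 0
    rwa [show σ 0 = i.succ from Equiv.swap_apply_left _ _] at this
  have hsum : (∑ j, w (T z j)) = ∑ j, w (z j) := by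
    rw [← Equiv.sum_comp σ (fun j => w (T z j))]
    exact Finset.sum_congr rfl fun j _ => by rw [happ j]
  rw [h0, h1, hsum]
  have key : ENNReal.ofReal (w (z i.succ)) * ENNReal.ofReal (w (z 0) / ∑ j, w (z j))
      = ENNReal.ofReal (w (z 0)) * ENNReal.ofReal (w (z i.succ) / ∑ j, w (z j)) :=
    ofReal_swap (hwnn _) (hwnn _)
  calc B.indicator (fun _ => (1:ℝ≥0∞)) (z i.succ) * ENNReal.ofReal (w (z i.succ)) *
      (ENNReal.ofReal (w (z 0) / ∑ j, w (z j)) * A.indicator (fun _ => (1:ℝ≥0∞)) (z 0))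
      = (B.indicator (fun _ => (1:ℝ≥0∞)) (z i.succ) * A.indicator (fun _ => (1:ℝ≥0∞)) (z 0)) *
        (ENNReal.ofReal (w (z i.succ)) * ENNReal.ofReal (w (z 0) / ∑ j, w (z j))) := by ring
    _ = (B.indicator (fun _ => (1:ℝ≥0∞)) (z i.succ) * A.indicator (fun _ => (1:ℝ≥0∞)) (z 0)) *
        (ENNReal.ofReal (w (z 0)) * ENNReal.ofReal (w (z i.succ) / ∑ j, w (z j))) := by rw [key]
    _ = A.indicator (fun _ => (1:ℝ≥0∞)) (z 0) * ENNReal.ofReal (w (z 0)) *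
      (ENNReal.ofReal (w (z i.succ) / ∑ j, w (z j)) * B.indicator (fun _ => (1:ℝ≥0∞)) (z i.succ)) := by ring

lemma indicator_one_ne_top (A : Set ℝ) (x : ℝ) :
    A.indicator (fun _ => (1:ℝ≥0∞)) x ≠ ⊤ := by
  by_cases h : x ∈ A <;> simp [h]

lemma barker_main_aux {M : ℕ} (ν : Measure ℝ) [IsFiniteMeasure ν]
    (w : ℝ → ℝ) (hwmeas : Measurable w)
    (A B : Set ℝ) (hA : MeasurableSet A) (hB : MeasurableSet B) :
    ∫⁻ x, B.indicator (fun _ => (1:ℝ≥0∞)) x * ENNReal.ofReal (w x) *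
      (∫⁻ y : Fin M → ℝ,
        (ENNReal.ofReal (w x / (w x + ∑ i, w (y i))) * A.indicator (fun _ => 1) x
          + ∑ i : Fin M,
            ENNReal.ofReal (w (y i) / (w x + ∑ j, w (y j))) * A.indicator (fun _ => 1) (y i))
        ∂(Measure.pi fun _ : Fin M => ν)) ∂ν
    = ∫⁻ z : Fin (M+1) → ℝ,
        (B.indicator (fun _ => (1:ℝ≥0∞)) (z 0) * ENNReal.ofReal (w (z 0)) *
            (ENNReal.ofReal (w (z 0) / ∑ j, w (z j)) * A.indicator (fun _ => 1) (z 0))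
          + ∑ i : Fin M, B.indicator (fun _ => (1:ℝ≥0∞)) (z 0) * ENNReal.ofReal (w (z 0)) *
            (ENNReal.ofReal (w (z i.succ) / ∑ j, w (z j)) * A.indicator (fun _ => 1) (z i.succ)))
        ∂(Measure.pi fun _ : Fin (M+1) => ν) := by
  -- the function under the double integral
  set F : ℝ → (Fin M → ℝ) → ℝ≥0∞ := fun x y =>
    B.indicator (fun _ => (1:ℝ≥0∞)) x * ENNReal.ofReal (w x) *
      (ENNReal.ofReal (w x / (w x + ∑ i, w (y i))) * A.indicator (fun _ => 1) x
        + ∑ i : Fin M,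
          ENNReal.ofReal (w (y i) / (w x + ∑ j, w (y j))) * A.indicator (fun _ => 1) (y i)) with hF
  have hS : Measurable fun p : ℝ × (Fin M → ℝ) => w p.1 + ∑ i, w (p.2 i) :=
    (hwmeas.comp measurable_fst).add
      (Finset.measurable_sum _ fun i _ => hwmeas.comp ((measurable_pi_apply i).comp measurable_snd))
  have hFm : Measurable (Function.uncurry F) := by
    apply Measurable.mul
    · exact ((measurable_const.indicator hB).comp measurable_fst).mul
        (ENNReal.measurable_ofReal.comp (hwmeas.comp measurable_fst))
    · apply Measurable.add
      · exact (ENNReal.measurable_ofReal.comp ((hwmeas.comp measurable_fst).div hS)).mul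
          ((measurable_const.indicator hA).comp measurable_fst)
      · apply Finset.measurable_sum
        intro i _
        exact (ENNReal.measurable_ofReal.comp
            ((hwmeas.comp ((measurable_pi_apply i).comp measurable_snd)).div hS)).mul
          ((measurable_const.indicator hA).comp ((measurable_pi_apply i).comp measurable_snd))
  have step1 : ∫⁻ x, B.indicator (fun _ => (1:ℝ≥0∞)) x * ENNReal.ofReal (w x) *
      (∫⁻ y : Fin M → ℝ,
        (ENNReal.ofReal (w x / (w x + ∑ i, w (y i))) * A.indicator (fun _ => 1) x
          + ∑ i : Fin M,
            ENNReal.ofReal (w (y i) / (w x + ∑ j, w (y j))) * A.indicator (fun _ => 1) (y i))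
        ∂(Measure.pi fun _ : Fin M => ν)) ∂ν
      = ∫⁻ x, ∫⁻ y, F x y ∂(Measure.pi fun _ : Fin M => ν) ∂ν := by
    apply lintegral_congr
    intro x
    rw [hF]
    exact (lintegral_const_mul' _ _
      (ENNReal.mul_ne_top (indicator_one_ne_top B x) ENNReal.ofReal_ne_top)).symm
  rw [step1, lintegral_lintegral hFm.aemeasurable]
  -- transport to the pi space on Fin (M+1)
  have hMP := measurePreserving_piFinSuccAbove (fun _ : Fin (M+1) => (ν : Measure ℝ)) 0
  set e := MeasurableEquiv.piFinSuccAbove (fun _ : Fin (M+1) => ℝ) 0 with he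
  rw [← hMP.lintegral_comp_emb e.measurableEmbedding]
  apply lintegral_congr
  intro z
  have h1 : (e z).1 = z 0 := rfl
  have h2 : (e z).2 = fun j => z j.succ := by
    funext j
    show z (Fin.succAbove 0 j) = z j.succ
    rw [Fin.succAbove_zero]
  rw [hF]
  show F (e z).1 (e z).2 = _
  rw [h1, h2, hF]
  have hsum : (w (z 0) + ∑ i : Fin M, w (z i.succ)) = ∑ j : Fin (M+1), w (z j) :=
    (Fin.sum_univ_succ fun j => w (z j)).symm
  simp only [hsum]
  rw [mul_add, Finset.mul_sum]

/-- the ensemble (multiple-try) generalization of Barker's rule satisfies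
detailed balance.  From state `x`, draw `M ≥ 1` i.i.d. proposals `y₁, …, y_M` from the
proposal density `q`, set candidates `z₀ = x, z₁ = y₁, …, z_M = y_M`, and move to `z_m`
with probability proportional to `w(z_m) = π(z_m)/q(z_m)`.  The resulting Markov chain is
reversible with respect to `π`: its transition kernel `p` satisfies
`∫_B π(x) p(x, A) dx = ∫_A π(x) p(x, B) dx` for all measurable sets `A, B`. -/
theorem ensemble_barker_reversible
    (pi q : ℝ → ℝ) (hπnn : ∀ x, 0 ≤ pi x) (hqnn : ∀ x, 0 ≤ q x)
    (hπmeas : Measurable pi) (hqmeas : Measurable q)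
    (hq1 : ∫ x, q x = 1) (hπ1 : ∫ x, pi x = 1)
    (hac : ∀ x, 0 < pi x → 0 < q x)
    (M : ℕ) (hM : 1 ≤ M)
    (w : ℝ → ℝ) (hw : ∀ x, w x = pi x / q x)
    (ν : Measure ℝ) (hν : ν = volume.withDensity fun x => ENNReal.ofReal (q x))
    (p : ℝ → Set ℝ → ENNReal)
    (hp : ∀ (x : ℝ) (A : Set ℝ), MeasurableSet A →
      p x A = ∫⁻ y : Fin M → ℝ,
        (ENNReal.ofReal (w x / (w x + ∑ i, w (y i))) * A.indicator (fun _ => 1) x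
          + ∑ i : Fin M,
            ENNReal.ofReal (w (y i) / (w x + ∑ j, w (y j))) * A.indicator (fun _ => 1) (y i))
        ∂(Measure.pi fun _ : Fin M => ν)) :
    ∀ A B : Set ℝ, MeasurableSet A → MeasurableSet B →
      ∫⁻ x in B, ENNReal.ofReal (pi x) * p x A ∂volume
        = ∫⁻ x in A, ENNReal.ofReal (pi x) * p x B ∂volume := by
  
  have hwnn : ∀ x, 0 ≤ w x := fun x => (hw x) ▸ div_nonneg (hπnn x) (hqnn x)
  have hwmeas : Measurable w := by
    have : w = fun x => pi x / q x := funext hw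
    rw [this]; exact hπmeas.div hqmeas
  have hqw : ∀ x, q x * w x = pi x := by
    intro x
    rcases eq_or_ne (q x) 0 with h0 | hne
    · have hπ0 : pi x = 0 := by
        by_contra h
        have := hac x (lt_of_le_of_ne (hπnn x) (Ne.symm h))
        rw [h0] at this; exact lt_irrefl 0 this
      rw [h0, hπ0, zero_mul]
    · rw [hw x, mul_comm, div_mul_cancel₀ _ hne]
  have hqint : Integrable q := integrable_of_integral_eq_one hq1
  haveI : IsFiniteMeasure ν := by
    constructor
    rw [hν, withDensity_apply _ MeasurableSet.univ, Measure.restrict_univ,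
      ← ofReal_integral_eq_lintegral_ofReal hqint (ae_of_all _ hqnn)]
    exact ENNReal.ofReal_lt_top
  -- measurability of the transition-probability integrand over the pi space
  have hSz : Measurable fun z : Fin (M+1) → ℝ => ∑ j, w (z j) :=
    Finset.measurable_sum _ fun j _ => hwmeas.comp (measurable_pi_apply j)
  have hterm : ∀ (A B : Set ℝ), MeasurableSet A → MeasurableSet B → ∀ u v : Fin (M+1),
      Measurable fun z : Fin (M+1) → ℝ =>
        B.indicator (fun _ => (1:ℝ≥0∞)) (z 0) * ENNReal.ofReal (w (z 0)) *
          (ENNReal.ofReal (w (z u) / ∑ j, w (z j)) * A.indicator (fun _ => (1:ℝ≥0∞)) (z v)) := by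
    intro A B hA hB u v
    exact (((measurable_const.indicator hB).comp (measurable_pi_apply 0)).mul
        (ENNReal.measurable_ofReal.comp (hwmeas.comp (measurable_pi_apply 0)))).mul
      ((ENNReal.measurable_ofReal.comp
          ((hwmeas.comp (measurable_pi_apply u)).div hSz)).mul
        ((measurable_const.indicator hA).comp (measurable_pi_apply v)))
  -- main reduction
  have key : ∀ A B : Set ℝ, MeasurableSet A → MeasurableSet B →
      ∫⁻ x in B, ENNReal.ofReal (pi x) * p x A ∂volume
      = ∫⁻ z : Fin (M+1) → ℝ,
          (B.indicator (fun _ => (1:ℝ≥0∞)) (z 0) * ENNReal.ofReal (w (z 0)) *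
              (ENNReal.ofReal (w (z 0) / ∑ j, w (z j)) * A.indicator (fun _ => 1) (z 0))
            + ∑ i : Fin M, B.indicator (fun _ => (1:ℝ≥0∞)) (z 0) * ENNReal.ofReal (w (z 0)) *
              (ENNReal.ofReal (w (z i.succ) / ∑ j, w (z j)) * A.indicator (fun _ => 1) (z i.succ)))
          ∂(Measure.pi fun _ : Fin (M+1) => ν) := by
    intro A B hA hB
    rw [← barker_main_aux ν w hwmeas A B hA hB]
    have hpA : ∀ x, p x A = ∫⁻ y : Fin M → ℝ,
        (ENNReal.ofReal (w x / (w x + ∑ i, w (y i))) * A.indicator (fun _ => 1) x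
          + ∑ i : Fin M,
            ENNReal.ofReal (w (y i) / (w x + ∑ j, w (y j))) * A.indicator (fun _ => 1) (y i))
        ∂(Measure.pi fun _ : Fin M => ν) := fun x => hp x A hA
    simp only [hpA]
    -- measurability of inner integral in x
    have hS : Measurable fun p : ℝ × (Fin M → ℝ) => w p.1 + ∑ i, w (p.2 i) :=
      (hwmeas.comp measurable_fst).add
        (Finset.measurable_sum _ fun i _ =>
          hwmeas.comp ((measurable_pi_apply i).comp measurable_snd))
    have hKm : Measurable fun pr : ℝ × (Fin M → ℝ) =>
        (ENNReal.ofReal (w pr.1 / (w pr.1 + ∑ i, w (pr.2 i))) * A.indicator (fun _ => 1) pr.1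
          + ∑ i : Fin M, ENNReal.ofReal (w (pr.2 i) / (w pr.1 + ∑ j, w (pr.2 j)))
              * A.indicator (fun _ => 1) (pr.2 i)) := by
      apply Measurable.add
      · exact (ENNReal.measurable_ofReal.comp ((hwmeas.comp measurable_fst).div hS)).mul
          ((measurable_const.indicator hA).comp measurable_fst)
      · apply Finset.measurable_sum
        intro i _
        exact (ENNReal.measurable_ofReal.comp
            ((hwmeas.comp ((measurable_pi_apply i).comp measurable_snd)).div hS)).mul
          ((measurable_const.indicator hA).comp ((measurable_pi_apply i).comp measurable_snd))
    have hinner : Measurable fun x : ℝ => ∫⁻ y : Fin M → ℝ,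
        (ENNReal.ofReal (w x / (w x + ∑ i, w (y i))) * A.indicator (fun _ => 1) x
          + ∑ i : Fin M,
            ENNReal.ofReal (w (y i) / (w x + ∑ j, w (y j))) * A.indicator (fun _ => 1) (y i))
        ∂(Measure.pi fun _ : Fin M => ν) := hKm.lintegral_prod_right'
    have hwd : ∀ g : ℝ → ℝ≥0∞, Measurable g →
        ∫⁻ x in B, ENNReal.ofReal (q x) * g x ∂volume = ∫⁻ x in B, g x ∂ν := by
      intro g hg
      rw [hν, setLIntegral_withDensity_eq_setLIntegral_mul volume hqmeas.ennreal_ofReal hg hB]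
      rfl
    calc ∫⁻ x in B, ENNReal.ofReal (pi x) * _ ∂volume
        = ∫⁻ x in B, ENNReal.ofReal (q x) * (ENNReal.ofReal (w x) *
            (∫⁻ y : Fin M → ℝ,
              (ENNReal.ofReal (w x / (w x + ∑ i, w (y i))) * A.indicator (fun _ => 1) x
                + ∑ i : Fin M, ENNReal.ofReal (w (y i) / (w x + ∑ j, w (y j)))
                    * A.indicator (fun _ => 1) (y i))
              ∂(Measure.pi fun _ : Fin M => ν))) ∂volume := by
          apply lintegral_congr
          intro x
          show ENNReal.ofReal (pi x) * _ = ENNReal.ofReal (q x) * (ENNReal.ofReal (w x) * _)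
          rw [← mul_assoc, ← ENNReal.ofReal_mul (hqnn x), hqw x]
      _ = ∫⁻ x in B, ENNReal.ofReal (w x) *
            (∫⁻ y : Fin M → ℝ,
              (ENNReal.ofReal (w x / (w x + ∑ i, w (y i))) * A.indicator (fun _ => 1) x
                + ∑ i : Fin M, ENNReal.ofReal (w (y i) / (w x + ∑ j, w (y j)))
                    * A.indicator (fun _ => 1) (y i))
              ∂(Measure.pi fun _ : Fin M => ν)) ∂ν :=
          hwd _ (hwmeas.ennreal_ofReal.mul hinner)
      _ = ∫⁻ x, B.indicator (fun _ => (1:ℝ≥0∞)) x * ENNReal.ofReal (w x) *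
            (∫⁻ y : Fin M → ℝ,
              (ENNReal.ofReal (w x / (w x + ∑ i, w (y i))) * A.indicator (fun _ => 1) x
                + ∑ i : Fin M, ENNReal.ofReal (w (y i) / (w x + ∑ j, w (y j)))
                    * A.indicator (fun _ => 1) (y i))
              ∂(Measure.pi fun _ : Fin M => ν)) ∂ν := by
          rw [← lintegral_indicator hB]
          apply lintegral_congr
          intro x
          by_cases hx : x ∈ B <;> simp [hx]
  intro A B hA hB
  rw [key A B hA hB, key B A hB hA]
  rw [lintegral_add_left (hterm A B hA hB 0 0),
      lintegral_add_left (hterm B A hB hA 0 0)]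
  congr 1
  · -- diagonal terms
    apply lintegral_congr
    intro z
    ring
  · -- cross terms
    rw [lintegral_finset_sum _ (fun i _ => hterm A B hA hB i.succ i.succ),
        lintegral_finset_sum _ (fun i _ => hterm B A hB hA i.succ i.succ)]
    exact Finset.sum_congr rfl fun i _ => barker_swap_aux ν w hwnn A B i
end

section
/- For independent X^A ~ IG(μ_A, λ) and X^B ~ IG(μ_B, λ) with μ_A < μ_B and common shape λ, the probability that X^A < X^B is strictly greater than 1/2. -/
open MeasureTheory Real Set ProbabilityTheory

/-- The inverse Gaussian density `IG(μ, λ)`. -/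
noncomputable def igPDF (μ lam x : ℝ) : ℝ :=
  Real.sqrt (lam / (2 * Real.pi * x ^ 3)) *
    Real.exp (-(lam * (x - μ) ^ 2) / (2 * μ ^ 2 * x))

/-!
The likelihood ratio of `IG(μ_A, λ)` to `IG(μ_B, λ)` is
`g t = exp (λ/μ_A - λ/μ_B - (λ/(2μ_A²) - λ/(2μ_B²)) t)`, strictly decreasing when `μ_A < μ_B`.
Writing `f_B` for the density of `X^B`,
`P(X^A < X^B) - P(X^B < X^A) = ∬_{x < y} (g x - g y) f_B(x) f_B(y) dx dy > 0`,
while the two probabilities add up to `1` because ties have probability zero.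
-/

open scoped ENNReal

section LinearOrder

variable {α : Type*} [LinearOrder α] [TopologicalSpace α] [OrderClosedTopology α]
  [SecondCountableTopology α] [MeasurableSpace α] [BorelSpace α]

namespace MeasureTheory.Measure

theorem ae_prod_fst_ne_snd (μ ν : Measure α) [SFinite ν] [NullSingletonClass ν] :
    ∀ᵐ p ∂μ.prod ν, p.1 ≠ p.2 :=
  (ae_prod_iff_ae_ae (isClosed_eq continuous_fst continuous_snd).measurableSet.compl).2 <|
    ae_of_all μ fun x => (ν.ae_ne x).mono fun _ hy => hy.symm

theorem prod_setOf_lt_add_prod_setOf_lt (μ ν : Measure α) [SFinite μ] [SFinite ν]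
    [NullSingletonClass ν] :
    μ.prod ν {p | p.1 < p.2} + ν.prod μ {p | p.1 < p.2} = μ univ * ν univ := by
  have hswap : ν.prod μ {p | p.1 < p.2} = μ.prod ν {p | p.1 < p.2}ᶜ := by
    rw [← prod_swap, map_apply measurable_swap measurableSet_lt']
    refine measure_congr (Filter.eventuallyEq_set.2 ((ae_prod_fst_ne_snd μ ν).mono fun p hp => ?_))
    change p.2 < p.1 ↔ ¬p.1 < p.2
    rw [not_lt]
    exact ⟨le_of_lt, fun h => h.lt_of_ne hp.symm⟩
  rw [hswap, measure_add_measure_compl measurableSet_lt', ← prod_prod, univ_prod_univ]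

theorem prod_self_setOf_lt_ne_zero {ν : Measure α} [SFinite ν] [NullSingletonClass ν]
    (hν : ν ≠ 0) : ν.prod ν {p | p.1 < p.2} ≠ 0 := by
  intro h
  have hsum := prod_setOf_lt_add_prod_setOf_lt ν ν
  rw [h, add_zero, eq_comm, mul_self_eq_zero, measure_univ_eq_zero] at hsum
  exact hν hsum

theorem prod_withDensity_right_lt_left_of_strictAnti {ν : Measure α} [IsFiniteMeasure ν]
    [NullSingletonClass ν] {g : α → ℝ≥0∞} (hg : StrictAnti g) [IsFiniteMeasure (ν.withDensity g)]
    (hν : ν ≠ 0) :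
    ν.prod (ν.withDensity g) {p | p.1 < p.2} < (ν.withDensity g).prod ν {p | p.1 < p.2} := by
  have hfin := measure_ne_top (ν.prod (ν.withDensity g)) {p | p.1 < p.2}
  rw [prod_withDensity_right hg.antitone.measurable, withDensity_apply _ measurableSet_lt']
    at hfin ⊢
  rw [prod_withDensity_left hg.antitone.measurable, withDensity_apply _ measurableSet_lt']
  exact setLIntegral_strict_mono measurableSet_lt' (prod_self_setOf_lt_ne_zero hν)
    (hg.antitone.measurable.comp measurable_fst) hfin (ae_of_all _ fun p hp => hg hp)

end MeasureTheory.Measure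

theorem ProbabilityTheory.IndepFun.measure_setOf_lt {Ω : Type*} [MeasurableSpace Ω]
    {P : Measure Ω} [IsFiniteMeasure P] {X Y : Ω → α} (hXY : IndepFun X Y P)
    (hX : Measurable X) (hY : Measurable Y) :
    P {ω | X ω < Y ω} = (P.map X).prod (P.map Y) {p | p.1 < p.2} := by
  rw [← (indepFun_iff_map_prod_eq_prod_map_map hX.aemeasurable hY.aemeasurable).1 hXY,
    Measure.map_apply (hX.prodMk hY) measurableSet_lt']
  rfl

end LinearOrder

theorem strictAnti_ofReal_exp_sub_mul (a : ℝ) {c : ℝ} (hc : 0 < c) :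
    StrictAnti fun t => ENNReal.ofReal (exp (a - c * t)) := fun s t hst =>
  (ENNReal.ofReal_lt_ofReal_iff (exp_pos _)).2 (exp_lt_exp.2 (by nlinarith))

theorem igPDF_nonneg (μ lam x : ℝ) : 0 ≤ igPDF μ lam x :=
  mul_nonneg (sqrt_nonneg _) (exp_pos _).le

@[fun_prop]
theorem measurable_igPDF (μ lam : ℝ) : Measurable (igPDF μ lam) := by
  unfold igPDF
  fun_prop

theorem igPDF_eq_exp_mul_igPDF {μ₁ μ₂ : ℝ} (lam : ℝ) (hμ₁ : 0 < μ₁) (hμ₂ : 0 < μ₂) {t : ℝ}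
    (ht : 0 < t) :
    igPDF μ₁ lam t =
      exp (lam / μ₁ - lam / μ₂ - (lam / (2 * μ₁ ^ 2) - lam / (2 * μ₂ ^ 2)) * t) *
        igPDF μ₂ lam t := by
  have hexponent : -(lam * (t - μ₁) ^ 2) / (2 * μ₁ ^ 2 * t) =
      (lam / μ₁ - lam / μ₂ - (lam / (2 * μ₁ ^ 2) - lam / (2 * μ₂ ^ 2)) * t) +
        -(lam * (t - μ₂) ^ 2) / (2 * μ₂ ^ 2 * t) := by
    field_simp
    ring
  rw [igPDF, igPDF, hexponent, exp_add]
  ring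

noncomputable def igMeasure (μ lam : ℝ) : Measure ℝ :=
  (volume.restrict (Ioi 0)).withDensity fun x => ENNReal.ofReal (igPDF μ lam x)

instance nullSingletonClass_igMeasure (μ lam : ℝ) : NullSingletonClass (igMeasure μ lam) := by
  unfold igMeasure
  infer_instance

theorem map_eq_igMeasure {Ω : Type*} [MeasurableSpace Ω] {P : Measure Ω} [IsProbabilityMeasure P]
    {X : Ω → ℝ} (hX : Measurable X) {μ lam : ℝ}
    (hdens : ∀ s : Set ℝ, MeasurableSet s →
      P (X ⁻¹' s) = ENNReal.ofReal (∫ x in s ∩ Ioi 0, igPDF μ lam x)) :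
    P.map X = igMeasure μ lam := by
  have hint : IntegrableOn (igPDF μ lam) (Ioi 0) := by
    by_contra h
    have huniv := hdens univ MeasurableSet.univ
    rw [univ_inter, integral_undef h] at huniv
    simp at huniv
  ext s hs
  rw [Measure.map_apply hX hs, hdens s hs, igMeasure, withDensity_apply _ hs,
    Measure.restrict_restrict hs, ofReal_integral_eq_lintegral_ofReal
      (hint.mono_set inter_subset_right) (ae_of_all _ (igPDF_nonneg μ lam))]

theorem igMeasure_eq_withDensity_igMeasure {μ₁ μ₂ : ℝ} (lam : ℝ) (hμ₁ : 0 < μ₁) (hμ₂ : 0 < μ₂) :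
    igMeasure μ₁ lam = (igMeasure μ₂ lam).withDensity fun t => ENNReal.ofReal
      (exp (lam / μ₁ - lam / μ₂ - (lam / (2 * μ₁ ^ 2) - lam / (2 * μ₂ ^ 2)) * t)) := by
  rw [igMeasure, igMeasure, ← withDensity_mul _ (by fun_prop) (by fun_prop)]
  refine withDensity_congr_ae ((ae_restrict_iff' measurableSet_Ioi).2 (ae_of_all _ fun t ht => ?_))
  dsimp only [Pi.mul_apply]
  rw [← ENNReal.ofReal_mul (igPDF_nonneg _ _ _), mul_comm,
    igPDF_eq_exp_mul_igPDF lam hμ₁ hμ₂ ht]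

theorem exists_strictAnti_igMeasure_eq_withDensity {μ₁ μ₂ lam : ℝ} (hlam : 0 < lam)
    (hμ₁ : 0 < μ₁) (hμ₁₂ : μ₁ < μ₂) :
    ∃ g : ℝ → ℝ≥0∞, StrictAnti g ∧ igMeasure μ₁ lam = (igMeasure μ₂ lam).withDensity g := by
  have hrate : 0 < lam / (2 * μ₁ ^ 2) - lam / (2 * μ₂ ^ 2) :=
    sub_pos.2 (div_lt_div_of_pos_left hlam (by positivity) (by gcongr))
  exact ⟨_, strictAnti_ofReal_exp_sub_mul _ hrate,
    igMeasure_eq_withDensity_igMeasure lam hμ₁ (hμ₁.trans hμ₁₂)⟩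

theorem ig_race_favors_smaller_mean_general
    {Ω : Type*} [MeasurableSpace Ω] (P : Measure Ω) [IsProbabilityMeasure P]
    (XA XB : Ω → ℝ) (hXA : Measurable XA) (hXB : Measurable XB)
    (hindep : IndepFun XA XB P)
    (μA μB lam : ℝ) (hμA : 0 < μA) (hlam : 0 < lam) (hμ : μA < μB)
    (hdensA : ∀ s : Set ℝ, MeasurableSet s →
      P (XA ⁻¹' s) = ENNReal.ofReal (∫ x in s ∩ Set.Ioi (0 : ℝ), igPDF μA lam x))
    (hdensB : ∀ s : Set ℝ, MeasurableSet s →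
      P (XB ⁻¹' s) = ENNReal.ofReal (∫ x in s ∩ Set.Ioi (0 : ℝ), igPDF μB lam x)) :
    (1 : ENNReal) / 2 < P {ω | XA ω < XB ω} := by
  have hlawA := map_eq_igMeasure hXA hdensA
  have hlawB := map_eq_igMeasure hXB hdensB
  have : IsProbabilityMeasure (igMeasure μA lam) :=
    hlawA ▸ Measure.isProbabilityMeasure_map hXA.aemeasurable
  have : IsProbabilityMeasure (igMeasure μB lam) :=
    hlawB ▸ Measure.isProbabilityMeasure_map hXB.aemeasurable
  obtain ⟨g, hg, htilt⟩ := exists_strictAnti_igMeasure_eq_withDensity hlam hμA hμ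
  have : IsFiniteMeasure ((igMeasure μB lam).withDensity g) := htilt ▸ inferInstance
  have hBA_lt_AB : (igMeasure μB lam).prod (igMeasure μA lam) {p | p.1 < p.2} <
      (igMeasure μA lam).prod (igMeasure μB lam) {p | p.1 < p.2} := by
    rw [htilt]
    exact Measure.prod_withDensity_right_lt_left_of_strictAnti hg (IsProbabilityMeasure.ne_zero _)
  have hsum := Measure.prod_setOf_lt_add_prod_setOf_lt (igMeasure μA lam) (igMeasure μB lam)
  rw [measure_univ, measure_univ, mul_one] at hsum
  rw [hindep.measure_setOf_lt hXA hXB, hlawA, hlawB, ENNReal.div_lt_iff (by simp) (by simp),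
    mul_two, ← hsum]
  exact ENNReal.add_lt_add_left (measure_ne_top _ _) hBA_lt_AB

/-- for independent `X^A ~ IG(μ_A, λ)` and `X^B ~ IG(μ_B, λ)` with
`μ_A < μ_B` and common shape `λ`, the probability that `X^A < X^B` is strictly greater
than `1/2`. -/
theorem ig_race_favors_smaller_mean
    {Ω : Type*} [MeasurableSpace Ω] (P : Measure Ω) [IsProbabilityMeasure P]
    (XA XB : Ω → ℝ) (hXA : Measurable XA) (hXB : Measurable XB)
    (hindep : IndepFun XA XB P)
    (μA μB lam : ℝ) (hμA : 0 < μA) (hμB : 0 < μB) (hlam : 0 < lam) (hμ : μA < μB)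
    (hdensA : ∀ s : Set ℝ, MeasurableSet s →
      P (XA ⁻¹' s) = ENNReal.ofReal (∫ x in s ∩ Set.Ioi (0 : ℝ), igPDF μA lam x))
    (hdensB : ∀ s : Set ℝ, MeasurableSet s →
      P (XB ⁻¹' s) = ENNReal.ofReal (∫ x in s ∩ Set.Ioi (0 : ℝ), igPDF μB lam x)) :
    (1 : ENNReal) / 2 < P {ω | XA ω < XB ω} :=
  ig_race_favors_smaller_mean_general P XA XB hXA hXB hindep μA μB lam hμA hlam hμ hdensA hdensB
end
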